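/- Let G be an abelian group, n ≥ 1, and let f : G → ℂ be a generalized polynomial of degree n with canonical representation f(x) = A_n(x,…,x) + A_{n−1}(x,…,x) + ⋯ + A_1(x) + C, where each A_k : G^k → ℂ is symmetric and k-additive and C is a constant. Then for all y_2,…,y_n in G the additive function x ↦ A_n(x, y_2,…,y_n) belongs to the variety τ(f). -/

import Mathlib

/-- The difference operator: `(Δ_y f)(x) = f(x+y) - f(x)`. -/
def diffOp {G : Type*} [AddCommGroup G] (y : G) (f : G → ℂ) : G → ℂ :=
  fun x => f (x + y) - f x

/-- `f` is a generalized polynomial: some iterated difference of order `n+1` always vanishes. -/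
def IsGenPoly {G : Type*} [AddCommGroup G] (f : G → ℂ) : Prop :=
  ∃ n : ℕ, ∀ ys : List G, ys.length = n + 1 → ys.foldr diffOp f = 0

/-- An additive function is a homomorphism of `G` into `(ℂ, +)`. -/
def IsAdditiveFn {G : Type*} [AddCommGroup G] (a : G → ℂ) : Prop :=
  ∀ x y : G, a (x + y) = a x + a y

/-- `f` is a polynomial: it belongs to the complex function algebra generated by the
additive functions (constants lie in every subalgebra). -/
def IsPolyFn {G : Type*} [AddCommGroup G] (f : G → ℂ) : Prop :=
  f ∈ Algebra.adjoin ℂ {a : G → ℂ | IsAdditiveFn a}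

/-- The variety `τ(f)`: smallest translation-invariant linear subspace of `ℂ^G`
containing `f` which is closed under pointwise convergence. -/
noncomputable def variety {G : Type*} [AddCommGroup G] (f : G → ℂ) :
    Submodule ℂ (G → ℂ) :=
  (Submodule.span ℂ {g : G → ℂ | ∃ y : G, g = fun x => f (x + y)}).topologicalClosure

/-- `A` is `k`-additive: additive in each variable separately. -/
def IsMultiadditive {G : Type*} [AddCommGroup G] {k : ℕ} (A : (Fin k → G) → ℂ) : Prop :=
  ∀ (v : Fin k → G) (i : Fin k) (x y : G),
    A (Function.update v i (x + y)) = A (Function.update v i x) + A (Function.update v i y)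

/-- `A` is symmetric: invariant under permutations of its arguments. -/
def IsSymmetricFn {G : Type*} [AddCommGroup G] {k : ℕ} (A : (Fin k → G) → ℂ) : Prop :=
  ∀ (v : Fin k → G) (σ : Equiv.Perm (Fin k)), A (v ∘ σ) = A v

/-!
Iterated differences lower the degree: a section `x ↦ B (x, …, x, w)` of a multiadditive `B`
with `m` free slots is killed by any `m + 1` differences. For symmetric `B` of arity `k + 1`,
`Δ_a B (x, …, x) = (k + 1) B (a, x, …, x)` up to terms of degree `< k`, so by induction
`Δ_{v₁} ⋯ Δ_{vₖ} B (x, …, x) = k! B (v₁, …, vₖ)` for every `x`. Hence `g = Δ_{y₂} ⋯ Δ_{yₙ} f`,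
a combination of translates of `f`, satisfies `g x - g 0 = Δ_x g 0 = n! Aₙ (x, y₂, …, yₙ)`.
As `f` has degree exactly `n`, some `n`-fold difference of `f` is a nonzero constant, so the
constants are combinations of translates of `f` as well, and therefore so is
`x ↦ Aₙ (x, y₂, …, yₙ)`: no closure is needed.
-/

open Finset Nat

section

variable {G : Type*} [AddCommGroup G]

def diffOpₗ (y : G) : Module.End ℂ (G → ℂ) where
  toFun := diffOp y
  map_add' := fwdDiff_add y
  map_smul' := fwdDiff_const_smul y

@[simp] lemma diffOpₗ_apply (y : G) (g : G → ℂ) : diffOpₗ y g = diffOp y g := rfl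

lemma diffOpₗ_commute (a b : G) : Commute (diffOpₗ a) (diffOpₗ b) := by
  refine LinearMap.ext fun g => funext fun x => ?_
  simp only [Module.End.mul_apply, diffOpₗ_apply, diffOp, add_right_comm x a b]
  ring

def iterDiff (ys : List G) : Module.End ℂ (G → ℂ) :=
  (ys.map diffOpₗ).prod

lemma iterDiff_nil : iterDiff ([] : List G) = 1 := rfl

lemma iterDiff_cons (a : G) (ys : List G) : iterDiff (a :: ys) = diffOpₗ a * iterDiff ys := by
  simp only [iterDiff, List.map_cons, List.prod_cons]

lemma iterDiff_cons' (a : G) (ys : List G) : iterDiff (a :: ys) = iterDiff ys * diffOpₗ a := by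
  rw [iterDiff_cons]
  refine Commute.list_prod_right _ _ fun b hb => ?_
  obtain ⟨y, -, rfl⟩ := List.mem_map.1 hb
  exact diffOpₗ_commute a y

lemma iterDiff_apply (ys : List G) (g : G → ℂ) : iterDiff ys g = ys.foldr diffOp g := by
  induction ys with
  | nil => rfl
  | cons a ys ih => rw [iterDiff_cons, Module.End.mul_apply, ih]; rfl

variable (G) in
def genPolyDegreeLT (m : ℕ) : Submodule ℂ (G → ℂ) :=
  ⨅ (ys : List G) (_ : ys.length = m), LinearMap.ker (iterDiff ys)

lemma mem_genPolyDegreeLT {m : ℕ} {g : G → ℂ} :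
    g ∈ genPolyDegreeLT G m ↔ ∀ ys : List G, ys.length = m → iterDiff ys g = 0 := by
  simp only [genPolyDegreeLT, Submodule.mem_iInf, LinearMap.mem_ker]

lemma mem_genPolyDegreeLT_succ {m : ℕ} {g : G → ℂ} :
    g ∈ genPolyDegreeLT G (m + 1) ↔ ∀ a, diffOp a g ∈ genPolyDegreeLT G m := by
  simp only [mem_genPolyDegreeLT]
  constructor
  · intro hg a ys hys
    simpa [iterDiff_cons'] using hg (a :: ys) (by simp [hys])
  · intro hg ys hys
    obtain ⟨a, ys, rfl⟩ := List.exists_cons_of_length_eq_add_one hys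
    simpa [iterDiff_cons'] using hg a ys (by simpa using hys)

lemma genPolyDegreeLT_mono : Monotone (genPolyDegreeLT G) := by
  refine monotone_nat_of_le_succ fun m g hg => mem_genPolyDegreeLT.2 fun ys hys => ?_
  obtain ⟨a, ys, rfl⟩ := List.exists_cons_of_length_eq_add_one hys
  rw [iterDiff_cons, Module.End.mul_apply,
    mem_genPolyDegreeLT.1 hg ys (by simpa using hys), map_zero]

lemma const_mem_genPolyDegreeLT_one (c : ℂ) : (fun _ => c) ∈ genPolyDegreeLT G 1 :=
  mem_genPolyDegreeLT_succ.2 fun a => by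
    rw [show diffOp a (fun _ => c) = 0 from funext fun _ => sub_self c]
    exact zero_mem _

section Multilinear

variable {ι : Type*} [DecidableEq ι] (B : MultilinearMap ℤ (fun _ : ι => G) ℂ)

lemma diffOp_piecewise (a : G) (s : Finset ι) (w : ι → G) :
    diffOp a (fun x => B (s.piecewise (fun _ => x) w)) =
      ∑ t ∈ s.ssubsets, fun x => B (t.piecewise (fun _ => x) (s.piecewise (fun _ => a) w)) := by
  funext x
  have hshift : s.piecewise (fun _ => x + a) w =
      s.piecewise ((fun _ => x) + s.piecewise (fun _ => a) w) (s.piecewise (fun _ => a) w) := by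
    ext i; by_cases hi : i ∈ s <;> simp [hi]
  simp only [diffOp, Finset.sum_apply]
  rw [hshift, B.map_piecewise_add, ← Finset.sum_erase_add _ _ (mem_powerset_self s),
    piecewise_piecewise_of_subset_right subset_rfl, add_sub_cancel_right]
  rfl

lemma piecewise_mem_genPolyDegreeLT (s : Finset ι) (w : ι → G) :
    (fun x => B (s.piecewise (fun _ => x) w)) ∈ genPolyDegreeLT G (#s + 1) := by
  induction s using Finset.strongInduction generalizing w with
  | H s ih =>
    refine mem_genPolyDegreeLT_succ.2 fun a => ?_
    rw [diffOp_piecewise]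
    refine Submodule.sum_mem _ fun t ht => genPolyDegreeLT_mono ?_ (ih t (mem_ssubsets.1 ht) _)
    exact card_lt_card (mem_ssubsets.1 ht)

lemma diag_mem_genPolyDegreeLT [Fintype ι] :
    (fun x => B fun _ => x) ∈ genPolyDegreeLT G (Fintype.card ι + 1) := by
  simpa using piecewise_mem_genPolyDegreeLT B univ 0

end Multilinear

section Symmetric

variable {k : ℕ} {B : MultilinearMap ℤ (fun _ : Fin (k + 1) => G) ℂ}

lemma IsSymmetricFn.curryLeft (hB : IsSymmetricFn ⇑B) (a : G) :
    IsSymmetricFn ⇑(B.curryLeft a) := by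
  intro v σ
  have hcons : (Fin.cons a (v ∘ σ) : Fin (k + 1) → G) =
      Fin.cons a v ∘ Equiv.Perm.decomposeFin.symm (0, σ) := by
    ext j
    cases j using Fin.cases <;>
      simp [Equiv.Perm.decomposeFin_symm_apply_zero, Equiv.Perm.decomposeFin_symm_apply_succ]
  rw [MultilinearMap.curryLeft_apply, MultilinearMap.curryLeft_apply, hcons]
  exact hB _ _

lemma IsSymmetricFn.map_update_const (hB : IsSymmetricFn ⇑B) (x a : G) (i : Fin (k + 1)) :
    B (Function.update (fun _ => x) i a) = B.curryLeft a fun _ => x := by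
  have h := hB (Function.update (fun _ => x) 0 a) (Equiv.swap 0 i)
  rw [Function.update_comp_equiv, Equiv.symm_swap, Equiv.swap_apply_left] at h
  change B (Function.update (fun _ => x) i a) = _ at h
  rw [MultilinearMap.curryLeft_apply, h]
  congr 1
  ext j
  cases j using Fin.cases <;> simp

lemma diffOp_diag_sub_mem (hB : IsSymmetricFn ⇑B) (a : G) :
    diffOp a (fun x => B fun _ => x) - ((k + 1 : ℕ) : ℂ) • (fun x => B.curryLeft a fun _ => x)
      ∈ genPolyDegreeLT G k := by
  have hexp : diffOp a (fun x => B fun _ => x)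
      - ((k + 1 : ℕ) : ℂ) • (fun x => B.curryLeft a fun _ => x)
      = ∑ s with 2 ≤ #s, fun x => B (sᶜ.piecewise (fun _ => x) fun _ => a) := by
    funext x
    have h := B.map_add_eq_map_add_linearDeriv_add (fun _ => x) (fun _ => a)
    simp only [MultilinearMap.linearDeriv_apply, hB.map_update_const] at h
    simp only [diffOp, Pi.sub_apply, Pi.smul_apply, Finset.sum_apply, piecewise_compl,
      smul_eq_mul]
    rw [← Pi.add_def, h]
    simp only [MultilinearMap.curryLeft_apply, sum_const, Finset.card_univ, Fintype.card_fin,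
      nsmul_eq_mul, cast_add, cast_one]
    ring
  rw [hexp]
  refine Submodule.sum_mem _ fun s hs => genPolyDegreeLT_mono ?_
    (piecewise_mem_genPolyDegreeLT B sᶜ _)
  have h2 := (mem_filter.1 hs).2
  have hle := s.card_le_univ
  rw [Fintype.card_fin] at hle
  rw [card_compl, Fintype.card_fin]
  omega

end Symmetric

theorem iterDiff_ofFn_diag : ∀ {k : ℕ} (B : MultilinearMap ℤ (fun _ : Fin k => G) ℂ),
    IsSymmetricFn ⇑B → ∀ v : Fin k → G,
      iterDiff (List.ofFn v) (fun x => B fun _ => x) = fun _ => (k ! : ℂ) * B v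
  | 0, B, _, v => by
    funext x
    simp [iterDiff_nil, Subsingleton.elim (fun _ => x) v]
  | k + 1, B, hB, v => by
    have hstep := mem_genPolyDegreeLT.1 (diffOp_diag_sub_mem hB (v 0)) _
      (List.length_ofFn (f := Fin.tail v))
    rw [map_sub, map_smul, sub_eq_zero,
      iterDiff_ofFn_diag _ (hB.curryLeft (v 0)) (Fin.tail v)] at hstep
    rw [List.ofFn_succ, iterDiff_cons', Module.End.mul_apply, diffOpₗ_apply]
    change iterDiff (List.ofFn (Fin.tail v)) _ = _
    rw [hstep]
    funext x
    simp only [cast_add, cast_one, MultilinearMap.curryLeft_apply, Fin.cons_self_tail,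
      Pi.smul_apply, smul_eq_mul, factorial_succ, cast_mul]
    ring

def IsMultiadditive.toMultilinearMap {k : ℕ} {A : (Fin k → G) → ℂ} (hA : IsMultiadditive A) :
    MultilinearMap ℤ (fun _ : Fin k => G) ℂ where
  toFun := A
  map_update_add' v i x y := by
    obtain rfl : ‹DecidableEq (Fin k)› = instDecidableEqFin k := Subsingleton.elim _ _
    exact hA v i x y
  map_update_smul' v i c x := by
    obtain rfl : ‹DecidableEq (Fin k)› = instDecidableEqFin k := Subsingleton.elim _ _
    exact map_zsmul (AddMonoidHom.mk' (fun t => A (Function.update v i t)) (hA v i)) c x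

@[simp] lemma IsMultiadditive.coe_toMultilinearMap {k : ℕ} {A : (Fin k → G) → ℂ}
    (hA : IsMultiadditive A) : ⇑hA.toMultilinearMap = A := rfl

def translateSpan (f : G → ℂ) : Submodule ℂ (G → ℂ) :=
  Submodule.span ℂ {g | ∃ y : G, g = fun x => f (x + y)}

lemma mem_translateSpan_self (f : G → ℂ) : f ∈ translateSpan f :=
  Submodule.subset_span ⟨0, by simp⟩

lemma translate_mem_translateSpan {f g : G → ℂ} (hg : g ∈ translateSpan f) (a : G) :
    (fun x => g (x + a)) ∈ translateSpan f := by
  have hle : translateSpan f ≤ (translateSpan f).comap (LinearMap.funLeft ℂ ℂ (· + a)) := by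
    refine Submodule.span_le.2 ?_
    rintro _ ⟨y, rfl⟩
    exact Submodule.subset_span ⟨a + y, funext fun x => by simp [add_assoc]⟩
  exact hle hg

lemma iterDiff_mem_translateSpan (f : G → ℂ) (ys : List G) : iterDiff ys f ∈ translateSpan f := by
  induction ys with
  | nil => exact mem_translateSpan_self f
  | cons a ys ih =>
    rw [iterDiff_cons, Module.End.mul_apply, diffOpₗ_apply]
    exact sub_mem (translate_mem_translateSpan ih a) ih

lemma const_mem_translateSpan {f g : G → ℂ} (hg : g ∈ translateSpan f) (hg0 : g ≠ 0)
    (hconst : ∀ a, diffOp a g = 0) (c : ℂ) : (fun _ => c) ∈ translateSpan f := by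
  have hg_eq : g = fun _ => g 0 :=
    funext fun x => by simpa [diffOp, sub_eq_zero] using congrFun (hconst x) 0
  have hg00 : g 0 ≠ 0 := fun h => hg0 (by rw [hg_eq, h]; rfl)
  convert (translateSpan f).smul_mem (c / g 0) hg using 1
  rw [hg_eq]
  funext x
  simp [div_mul_cancel₀ c hg00]

theorem iterDiff_ofFn_of_sum_diag {n : ℕ} (hn : 1 ≤ n) {A : (k : ℕ) → (Fin k → G) → ℂ} {C : ℂ}
    (hadd : ∀ k, 1 ≤ k → k ≤ n → IsMultiadditive (A k)) (hsym : IsSymmetricFn (A n))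
    {f : G → ℂ} (hrep : ∀ x, f x = (∑ k ∈ Icc 1 n, A k fun _ => x) + C) (v : Fin n → G) :
    iterDiff (List.ofFn v) f = fun _ => (n ! : ℂ) * A n v := by
  have hf : f = (∑ k ∈ Icc 1 n, fun x => A k fun _ => x) + fun _ => C :=
    funext fun x => by simp [hrep, Finset.sum_apply]
  have hlen : (List.ofFn v).length = n := List.length_ofFn
  have hlow : ∀ k ∈ Icc 1 n, k ≠ n → iterDiff (List.ofFn v) (fun x => A k fun _ => x) = 0 := by
    intro k hk hkn
    rw [mem_Icc] at hk
    refine mem_genPolyDegreeLT.1 (genPolyDegreeLT_mono ?_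
      (diag_mem_genPolyDegreeLT (hadd k hk.1 hk.2).toMultilinearMap)) _ hlen
    rw [Fintype.card_fin]
    omega
  rw [hf, map_add, map_sum, sum_eq_single n hlow (by simp [hn]),
    mem_genPolyDegreeLT.1 (genPolyDegreeLT_mono hn (const_mem_genPolyDegreeLT_one C)) _ hlen,
    add_zero]
  exact iterDiff_ofFn_diag (hadd n hn le_rfl).toMultilinearMap hsym v

end

/-- If `f` is a generalized polynomial of degree `n ≥ 1` with canonical representation
`f(x) = Σ_{k=1}^{n} A_k(x, …, x) + C`, then every additive function
`x ↦ A_n(x, y_2, …, y_n)` belongs to `τ(f)`. -/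
theorem topTerm_sections_mem_variety
    {G : Type*} [AddCommGroup G] (n : ℕ) (hn : 1 ≤ n)
    (A : (k : ℕ) → (Fin k → G) → ℂ) (C : ℂ)
    (hadd : ∀ k, 1 ≤ k → k ≤ n → IsMultiadditive (A k))
    (hsym : ∀ k, 1 ≤ k → k ≤ n → IsSymmetricFn (A k))
    (f : G → ℂ)
    (hrep : ∀ x, f x = (∑ k ∈ Finset.Icc 1 n, A k (fun _ => x)) + C)
    (hdeg : (∀ ys : List G, ys.length = n + 1 → ys.foldr diffOp f = 0) ∧
        ¬ (∀ ys : List G, ys.length = n → ys.foldr diffOp f = 0)) :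
    ∀ y : Fin n → G,
      (fun x => A n (Function.update y (⟨0, hn⟩ : Fin n) x)) ∈ variety f := by
  intro y
  obtain ⟨k, rfl⟩ : ∃ k, n = k + 1 := ⟨n - 1, by omega⟩
  set g := iterDiff (List.ofFn (Fin.tail y)) f
  have hslice : ∀ x, g x = g 0 + ((k + 1)! : ℂ) * A (k + 1) (Function.update y ⟨0, hn⟩ x) := by
    intro x
    have h := congrFun (iterDiff_ofFn_of_sum_diag hn hadd (hsym _ hn le_rfl) hrep
      (Function.update y ⟨0, hn⟩ x)) 0
    rw [List.ofFn_succ, iterDiff_cons] at h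
    simp only [Fin.zero_eta, Function.update_self, ne_eq, Fin.succ_ne_zero, not_false_eq_true,
      Function.update_of_ne, Module.End.mul_apply, diffOpₗ_apply, diffOp, zero_add] at h
    exact eq_add_of_sub_eq' h
  obtain ⟨ys, hlen, hne⟩ : ∃ ys : List G, ys.length = k + 1 ∧ iterDiff ys f ≠ 0 := by
    simpa [iterDiff_apply] using hdeg.2
  have hconst := const_mem_translateSpan (iterDiff_mem_translateSpan f ys) hne fun a => by
    simpa [iterDiff_cons, iterDiff_apply] using hdeg.1 (a :: ys) (by simp [hlen])
  have htarget : (fun x => A (k + 1) (Function.update y ⟨0, hn⟩ x)) =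
      ((k + 1)! : ℂ)⁻¹ • (g - fun _ => g 0) := by
    funext x
    rw [Pi.smul_apply, Pi.sub_apply, hslice x, add_sub_cancel_left, smul_eq_mul,
      inv_mul_cancel_left₀ (Nat.cast_ne_zero.2 (factorial_ne_zero _))]
  rw [htarget]
  exact Submodule.le_topologicalClosure _
    (Submodule.smul_mem _ _ (sub_mem (iterDiff_mem_translateSpan f _) (hconst _)))
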